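/- arXiv:1803.08751 — 3 statements merged into one kernel-verified Lean document; each statement's English description precedes it below -/
import Mathlib

section
/- Theorem A (the generalized restricted sum formula with s = 0, for all indices k and all t) implies Theorem B (the version with an extra tail {1}^s, for all indices k and all s, t). Concretely, defining F(k,s,t) := G(k,s,t) − H(k,s,t) as the difference of the two sides of the s-version, one has the recursions F((k,1),s,t) = ∑_{u=0}^{t} F(k, s+t−u+1, u), hence F(k,s+1,t) = F((k,1),s,t) − F((k,1),s+1,t−1), and consequently F(k,s+1,t) = ∑_{t'=1}^{t} (−1)^{t'−1} F((k,{1}^{t'}), s, t−t'+1); combined with F(k,s,0)=0 and F(k,0,t)=0 this yields F(k,s,t)=0 for all s,t. -/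
/-- The multiple zeta value ζ(k₁,…,k_r) = ∑_{n₁>⋯>n_r≥1} ∏ nᵢ^{-kᵢ}. -/
noncomputable def mzeta (k : List ℕ) : ℝ :=
  ∑' n : {n : Fin k.length → ℕ // (∀ i j : Fin k.length, i < j → n j < n i) ∧ ∀ i, 1 ≤ n i},
    ∏ i, ((n.1 i : ℝ) ^ k.get i)⁻¹

/-- ζ⁺(k₁,…,k_r) := ζ(k₁+1,k₂,…,k_r). -/
noncomputable def zp : List ℕ → ℝ
  | [] => mzeta []
  | a :: t => mzeta ((a + 1) :: t)

/-- Compositions of `n` into `r` positive parts. -/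
def compFinset (r n : ℕ) : Finset (Fin r → ℕ) :=
  (Finset.Nat.antidiagonalTuple r n).filter (fun m => ∀ i, 1 ≤ m i)

/-- Weak compositions of `n` into `r` non-negative parts. -/
def weakComp (r n : ℕ) : Finset (Fin r → ℕ) := Finset.Nat.antidiagonalTuple r n

/-- The index (k₁,{1}^{m₁},…,k_{r-1},{1}^{m_{r-1}},k_r). -/
def baseIdx (k : List ℕ) (m : Fin (k.length - 1) → ℕ) : List ℕ :=
  (List.ofFn fun i : Fin (k.length - 1) =>
    k.get (Fin.castLE (Nat.sub_le _ _) i) :: List.replicate (m i) 1).flatten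
    ++ [k.getD (k.length - 1) 1]
/-- G(k,s,t): left-hand side of the s-version. -/
noncomputable def Gfun (k : List ℕ) (s t : ℕ) : ℝ :=
  ∑ m ∈ compFinset k.length (k.length + t),
    ∑ a ∈ Fintype.piFinset (fun i => compFinset (m i) (k.get i + m i - 1)),
      zp ((List.ofFn fun i => List.ofFn (a i)).flatten ++ List.replicate s 1)

/-- H(k,s,t): right-hand side of the s-version. -/
noncomputable def Hfun (k : List ℕ) (s t : ℕ) : ℝ :=
  ∑ l ∈ Finset.range (t + 1),
    ∑ m ∈ weakComp (k.length - 1) (t - l),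
      ∑ e ∈ weakComp (baseIdx k m ++ List.replicate s 1).length l,
        zp (List.zipWith (· + ·) (baseIdx k m ++ List.replicate s 1) (List.ofFn e))

/-- F := G − H. -/
noncomputable def Ffun (k : List ℕ) (s t : ℕ) : ℝ := Gfun k s t - Hfun k s t

/-!
Write `F(k,s,t) = G(k,s,t) - H(k,s,t)`. Appending a `1` to `k` and splitting off, on the `G` side,
the last part `m_{r+1} = t + 1 - u` of the composition (whose block is forced to be `{1}^{m_{r+1}}`)
and, on the `H` side, the number `t - u` of `1`'s inserted before the new last entry, gives
`F((k,1),s,t) = ∑_{u ≤ t} F(k, s+t-u+1, u)`. Subtracting the instances `(s,t+1)` and `(s+1,t)` of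
this recursion yields `F(k,s+1,t+1) = F((k,1),s,t+1) - F((k,1),s+1,t)`, so a double induction on
`s` and `t`, for all admissible `k` at once, reduces everything to Theorem A (`s = 0`) and to
`t = 0`, where both sides equal `ζ⁺(k,{1}^s)`.
-/

open Finset

lemma mem_compFinset {r n : ℕ} {m : Fin r → ℕ} :
    m ∈ compFinset r n ↔ ∑ i, m i = n ∧ ∀ i, 1 ≤ m i := by
  simp [compFinset, Finset.Nat.mem_antidiagonalTuple]

lemma mem_weakComp {r n : ℕ} {m : Fin r → ℕ} : m ∈ weakComp r n ↔ ∑ i, m i = n :=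
  Finset.Nat.mem_antidiagonalTuple

lemma le_sum_of_forall_one_le {r : ℕ} {m : Fin r → ℕ} (hm : ∀ i, 1 ≤ m i) :
    r ≤ ∑ i, m i := by
  simpa using card_nsmul_le_sum univ m 1 fun i _ => hm i

lemma compFinset_self (n : ℕ) : compFinset n n = {fun _ => 1} := by
  ext m
  simp only [mem_compFinset, mem_singleton]
  constructor
  · rintro ⟨hsum, hpos⟩
    funext i
    by_contra hne
    have hlt : ∑ _j : Fin n, 1 < ∑ j, m j :=
      sum_lt_sum (fun j _ => hpos j) ⟨i, mem_univ i, lt_of_le_of_ne (hpos i) (Ne.symm hne)⟩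
    simp [hsum] at hlt
  · rintro rfl
    simp

lemma compFinset_one {n : ℕ} (hn : 1 ≤ n) : compFinset 1 n = {fun _ => n} := by
  ext m
  simp only [mem_compFinset, Fin.sum_univ_one, mem_singleton, funext_iff, Fin.forall_fin_one]
  constructor
  · exact fun h => h.1
  · intro h
    exact ⟨h, h ▸ hn⟩

lemma sum_eq_sum_sum_snoc {α M : Type*} [AddCommMonoid M] {r : ℕ}
    {S : Finset (Fin (r + 1) → α)} {I : Finset α} {T : α → Finset (Fin r → α)}
    (hS : ∀ v m, Fin.snoc m v ∈ S ↔ v ∈ I ∧ m ∈ T v) (f : (Fin (r + 1) → α) → M) :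
    ∑ m ∈ S, f m = ∑ v ∈ I, ∑ m ∈ T v, f (Fin.snoc m v) := by
  rw [sum_sigma']
  refine sum_nbij' (fun m => ⟨m (Fin.last r), Fin.init m⟩) (fun p => Fin.snoc p.2 p.1)
    (fun m hm => ?_) (fun p hp => ?_) (fun m _ => Fin.snoc_init_self m) (fun p _ => ?_)
    (fun m _ => by rw [Fin.snoc_init_self])
  · rw [← Fin.snoc_init_self m, hS] at hm
    simpa using hm
  · exact (hS _ _).2 (by simpa using hp)
  · simp

lemma snoc_mem_weakComp_iff {r N v : ℕ} {m : Fin r → ℕ} :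
    Fin.snoc m v ∈ weakComp (r + 1) N ↔ v ∈ range (N + 1) ∧ m ∈ weakComp r (N - v) := by
  simp only [mem_weakComp, Fin.sum_univ_castSucc, Fin.snoc_castSucc, Fin.snoc_last, mem_range]
  omega

lemma snoc_mem_compFinset_iff {r t v : ℕ} {m : Fin r → ℕ} :
    Fin.snoc m v ∈ compFinset (r + 1) (r + 1 + t) ↔
      v ∈ Icc 1 (t + 1) ∧ m ∈ compFinset r (r + (t + 1 - v)) := by
  simp only [mem_compFinset, Fin.sum_univ_castSucc, Fin.snoc_castSucc, Fin.snoc_last,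
    Fin.forall_fin_succ', mem_Icc]
  constructor
  · rintro ⟨hsum, hpos, hv⟩
    have := le_sum_of_forall_one_le hpos
    exact ⟨⟨hv, by omega⟩, by omega, hpos⟩
  · rintro ⟨⟨hv, hvt⟩, hsum, hpos⟩
    exact ⟨by omega, hpos, hv⟩

lemma sum_weakComp_succ {M : Type*} [AddCommMonoid M] (r N : ℕ)
    (f : (Fin (r + 1) → ℕ) → M) :
    ∑ m ∈ weakComp (r + 1) N, f m =
      ∑ v ∈ range (N + 1), ∑ m ∈ weakComp r (N - v), f (Fin.snoc m v) :=
  sum_eq_sum_sum_snoc (fun _ _ => snoc_mem_weakComp_iff) f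

lemma sum_range_triangle_reflect {M : Type*} [AddCommMonoid M] (t : ℕ) (g : ℕ → ℕ → M) :
    ∑ l ∈ range (t + 1), ∑ v ∈ range (t - l + 1), g l v =
      ∑ u ∈ range (t + 1), ∑ l ∈ range (u + 1), g l (t - u) := by
  rw [sum_comm' (t' := range (t + 1)) (s' := fun v => range (t - v + 1))
    (fun l v => by simp only [mem_range]; omega), ← sum_range_reflect]
  refine sum_congr rfl fun u hu => ?_
  rw [mem_range] at hu
  rw [show t + 1 - 1 - u = t - u by omega, show t - (t - u) = u by omega]

lemma flatten_ofFn_singleton {n : ℕ} (g : Fin n → ℕ) :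
    (List.ofFn fun i => [g i]).flatten = List.ofFn g := by
  induction n with
  | zero => simp
  | succ n ih =>
    rw [List.ofFn_succ, List.flatten_cons, ih, List.singleton_append, ← List.ofFn_succ]

lemma zipWith_add_replicate_zero (w : List ℕ) :
    List.zipWith (· + ·) w (List.replicate w.length 0) = w := by
  induction w with
  | nil => rfl
  | cons a w ih => simp [List.replicate_succ, ih]

noncomputable def blockSum {r : ℕ} (K m : Fin r → ℕ) (s : ℕ) : ℝ :=
  ∑ a ∈ Fintype.piFinset (fun i => compFinset (m i) (K i + m i - 1)),
    zp ((List.ofFn fun i => List.ofFn (a i)).flatten ++ List.replicate s 1)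

noncomputable def GfunTuple (r : ℕ) (K : Fin r → ℕ) (s t : ℕ) : ℝ :=
  ∑ m ∈ compFinset r (r + t), blockSum K m s

def baseIdxTuple {r : ℕ} (K : Fin (r + 1) → ℕ) (m : Fin r → ℕ) : List ℕ :=
  (List.ofFn fun i : Fin r => K i.castSucc :: List.replicate (m i) 1).flatten ++ [K (Fin.last r)]

noncomputable def shiftSum (w : List ℕ) (l : ℕ) : ℝ :=
  ∑ e ∈ weakComp w.length l, zp (List.zipWith (· + ·) w (List.ofFn e))

noncomputable def HfunTuple (r : ℕ) (K : Fin (r + 1) → ℕ) (s t : ℕ) : ℝ :=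
  ∑ l ∈ range (t + 1), ∑ m ∈ weakComp r (t - l),
    shiftSum (baseIdxTuple K m ++ List.replicate s 1) l

lemma Gfun_eq_GfunTuple {k : List ℕ} {n : ℕ} (h : k.length = n) (s t : ℕ) :
    Gfun k s t = GfunTuple n (fun i => k.get (Fin.cast h.symm i)) s t := by
  subst h
  rfl

lemma Hfun_eq_HfunTuple {k : List ℕ} {d : ℕ} (h : k.length = d + 1) (s t : ℕ) :
    Hfun k s t = HfunTuple d (fun i => k.get (Fin.cast h.symm i)) s t := by
  obtain rfl : d = k.length - 1 := by omega
  have hbase : ∀ m, baseIdx k m = baseIdxTuple (fun i => k.get (Fin.cast h.symm i)) m := by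
    intro m
    simp only [baseIdx, baseIdxTuple,
      List.getD_eq_getElem k 1 (show k.length - 1 < k.length by omega)]
    rfl
  unfold Hfun HfunTuple shiftSum
  refine sum_congr rfl fun l _ => sum_congr rfl fun m _ => ?_
  rw [hbase]

lemma blockSum_snoc_one {r : ℕ} (K : Fin r → ℕ) (W : Fin (r + 1) → ℕ) (s : ℕ) :
    blockSum (Fin.snoc K 1) W s = blockSum K (fun i => W i.castSucc) (W (Fin.last r) + s) := by
  unfold blockSum
  have hlast : ∀ a ∈ Fintype.piFinset fun i =>
      compFinset (W i) ((Fin.snoc K 1 : Fin (r + 1) → ℕ) i + W i - 1),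
      a (Fin.last r) = fun _ => 1 := by
    intro a ha
    have := Fintype.mem_piFinset.1 ha (Fin.last r)
    rwa [Fin.snoc_last, add_tsub_cancel_left, compFinset_self, mem_singleton] at this
  refine sum_nbij' Fin.init (fun b => Fin.snoc (α := fun i => Fin (W i) → ℕ) b fun _ => 1)
    (fun a ha => ?_) (fun b hb => ?_) (fun a ha => ?_) (fun b _ => Fin.init_snoc _ _)
    (fun a ha => ?_)
  · rw [Fintype.mem_piFinset]
    intro i
    simpa [Fin.init] using Fintype.mem_piFinset.1 ha i.castSucc
  · rw [Fintype.mem_piFinset]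
    intro i
    refine Fin.lastCases ?_ (fun i => ?_) i
    · simp [compFinset_self]
    · simpa [Fin.init] using Fintype.mem_piFinset.1 hb i
  · rw [← hlast a ha]
    exact Fin.snoc_init_self a
  · rw [List.ofFn_succ', hlast a ha]
    simp [Fin.init]

lemma GfunTuple_snoc_one (r : ℕ) (K : Fin r → ℕ) (s t : ℕ) :
    GfunTuple (r + 1) (Fin.snoc K 1) s t =
      ∑ u ∈ range (t + 1), GfunTuple r K (s + (t - u) + 1) u := by
  unfold GfunTuple
  rw [sum_eq_sum_sum_snoc (fun _ _ => snoc_mem_compFinset_iff)]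
  simp only [blockSum_snoc_one, Fin.snoc_castSucc, Fin.snoc_last]
  refine sum_nbij' (fun v => t + 1 - v) (fun u => t + 1 - u) ?_ ?_ ?_ ?_ ?_ <;>
    intro v hv <;> simp only [mem_Icc, mem_range] at hv ⊢
  · omega
  · omega
  · omega
  · omega
  · rw [show s + (t - (t + 1 - v)) + 1 = v + s by omega]

lemma baseIdxTuple_snoc_one {r : ℕ} (K : Fin (r + 1) → ℕ) (m : Fin r → ℕ) (v c : ℕ) :
    baseIdxTuple (Fin.snoc K 1) (Fin.snoc m v) ++ List.replicate c 1 =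
      baseIdxTuple K m ++ List.replicate (v + 1 + c) 1 := by
  rw [baseIdxTuple, List.ofFn_succ']
  simp [baseIdxTuple, List.replicate_add, List.replicate_succ']

lemma HfunTuple_snoc_one (r : ℕ) (K : Fin (r + 1) → ℕ) (s t : ℕ) :
    HfunTuple (r + 1) (Fin.snoc K 1) s t =
      ∑ u ∈ range (t + 1), HfunTuple r K (s + (t - u) + 1) u := by
  unfold HfunTuple
  simp_rw [sum_weakComp_succ, baseIdxTuple_snoc_one]
  rw [sum_range_triangle_reflect t
    fun l v => ∑ m ∈ weakComp r (t - l - v),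
      shiftSum (baseIdxTuple K m ++ List.replicate (v + 1 + s) 1) l]
  refine sum_congr rfl fun u hu => sum_congr rfl fun l hl => ?_
  rw [mem_range] at hu hl
  rw [show t - l - (t - u) = u - l by omega, show t - u + 1 + s = s + (t - u) + 1 by omega]

lemma shiftSum_zero (w : List ℕ) : shiftSum w 0 = zp w := by
  rw [shiftSum, weakComp, Finset.Nat.antidiagonalTuple_zero_right, sum_singleton]
  have hzero : List.ofFn (0 : Fin w.length → ℕ) = List.replicate w.length 0 :=
    List.ofFn_const _ 0
  rw [hzero, zipWith_add_replicate_zero]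

lemma baseIdxTuple_zero {r : ℕ} (K : Fin (r + 1) → ℕ) : baseIdxTuple K 0 = List.ofFn K := by
  rw [baseIdxTuple, List.ofFn_succ' K]
  simp [flatten_ofFn_singleton]

lemma GfunTuple_zero {r : ℕ} {K : Fin r → ℕ} (hK : ∀ i, 1 ≤ K i) (s : ℕ) :
    GfunTuple r K s 0 = zp (List.ofFn K ++ List.replicate s 1) := by
  unfold GfunTuple blockSum
  rw [add_zero, compFinset_self, sum_singleton]
  simp only [add_tsub_cancel_right]
  rw [show (fun i => compFinset 1 (K i)) = fun i => {fun _ => K i} from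
    funext fun i => compFinset_one (hK i), Fintype.piFinset_singleton, sum_singleton]
  simp [flatten_ofFn_singleton]

lemma HfunTuple_zero {r : ℕ} (K : Fin (r + 1) → ℕ) (s : ℕ) :
    HfunTuple r K s 0 = zp (List.ofFn K ++ List.replicate s 1) := by
  rw [HfunTuple, zero_add, sum_range_one, Nat.sub_self, weakComp,
    Finset.Nat.antidiagonalTuple_zero_right, sum_singleton, shiftSum_zero, baseIdxTuple_zero]

lemma Ffun_eq_sub {k : List ℕ} {d : ℕ} (h : k.length = d + 1) (s t : ℕ) :
    Ffun k s t = GfunTuple (d + 1) (fun i => k.get (Fin.cast h.symm i)) s t -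
      HfunTuple d (fun i => k.get (Fin.cast h.symm i)) s t := by
  rw [Ffun, Gfun_eq_GfunTuple h, Hfun_eq_HfunTuple h]

lemma Ffun_zero_right {k : List ℕ} (hk : k ≠ []) (hpos : ∀ x ∈ k, 1 ≤ x) (s : ℕ) :
    Ffun k s 0 = 0 := by
  obtain ⟨d, hd⟩ := Nat.exists_eq_add_one.2 (List.length_pos_iff.2 hk)
  rw [Ffun_eq_sub hd, GfunTuple_zero (fun i => hpos _ (List.get_mem k _)), HfunTuple_zero,
    sub_self]

lemma Ffun_append_one {k : List ℕ} (hk : k ≠ []) (s t : ℕ) :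
    Ffun (k ++ [1]) s t = ∑ u ∈ range (t + 1), Ffun k (s + (t - u) + 1) u := by
  obtain ⟨d, hd⟩ := Nat.exists_eq_add_one.2 (List.length_pos_iff.2 hk)
  have hd' : (k ++ [1]).length = d + 1 + 1 := by simp [hd]
  have hget : (fun i => (k ++ [1]).get (Fin.cast hd'.symm i)) =
      Fin.snoc (fun i => k.get (Fin.cast hd.symm i)) 1 := by
    funext i
    refine Fin.lastCases ?_ (fun i => ?_) i
    · simp [hd]
    · simp [List.getElem_append_left (show (i : ℕ) < k.length by omega)]
  rw [Ffun_eq_sub hd', hget, GfunTuple_snoc_one, HfunTuple_snoc_one, ← sum_sub_distrib]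
  simp only [Ffun_eq_sub hd]

lemma Ffun_succ_succ {k : List ℕ} (hk : k ≠ []) (s t : ℕ) :
    Ffun k (s + 1) (t + 1) = Ffun (k ++ [1]) s (t + 1) - Ffun (k ++ [1]) (s + 1) t := by
  rw [Ffun_append_one hk, Ffun_append_one hk, sum_range_succ, Nat.sub_self, add_zero]
  have hshift : ∀ u ∈ range (t + 1),
      Ffun k (s + (t + 1 - u) + 1) u = Ffun k (s + 1 + (t - u) + 1) u :=
    fun u hu => by rw [show s + (t + 1 - u) = s + 1 + (t - u) by rw [mem_range] at hu; omega]
  rw [sum_congr rfl hshift]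
  abel

/-- Theorem A (the s = 0 case, for all indices) implies Theorem B (all s). -/
theorem thmA_implies_thmB
    (hA : ∀ k : List ℕ, k ≠ [] → (∀ x ∈ k, 1 ≤ x) → ∀ t : ℕ, Ffun k 0 t = 0) :
    ∀ k : List ℕ, k ≠ [] → (∀ x ∈ k, 1 ≤ x) → ∀ s t : ℕ, Ffun k s t = 0 := by
  intro k hk hpos s t
  induction s generalizing k t with
  | zero => exact hA k hk hpos t
  | succ s ihs =>
    induction t generalizing k with
    | zero => exact Ffun_zero_right hk hpos (s + 1)
    | succ t iht =>
      have hk' : k ++ [1] ≠ [] := by simp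
      have hpos' : ∀ x ∈ k ++ [1], 1 ≤ x := by simpa [or_imp, forall_and] using hpos
      rw [Ffun_succ_succ hk, ihs _ hk' hpos', iht _ hk' hpos', sub_self]
end

section
/- The harmonic product * on formal linear combinations of indices is associative: (k*l)*m = k*(l*m) for all indices k, l, m. -/
/-!
For indices `a :: k`, `b :: l`, `c :: m`, unfolding the recursion of `hmul` twice shows that both
`(k * l) * m` and `k * (l * m)` are the sum, over the seven nonempty sets `S` of heads, of the
product of the three tails (with the heads outside `S` put back) prefixed by the sum of `S`.
Working with the linear maps `x ↦ x * m` and `y ↦ k * y`, associativity then follows by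
well-founded induction on the total length of the three indices.
-/

/-- The harmonic (stuffle) product of two indices, as a formal ℤ-linear
combination of indices. -/
noncomputable def hmul : List ℕ → List ℕ → (List ℕ →₀ ℤ)
  | [], l => Finsupp.single l 1
  | k, [] => Finsupp.single k 1
  | a :: k, b :: l =>
      (hmul k (b :: l)).mapDomain (a :: ·) +
      (hmul (a :: k) l).mapDomain (b :: ·) +
      (hmul k l).mapDomain ((a + b) :: ·)
termination_by k l => k.length + l.length

/-- Bilinear extension of the harmonic product to formal ℤ-linear combinations. -/
noncomputable def hmulExt (x y : List ℕ →₀ ℤ) : List ℕ →₀ ℤ :=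
  x.sum fun k ck => y.sum fun l cl => (ck * cl) • hmul k l

open Finsupp

lemma hmul_nil_right (k : List ℕ) : hmul k [] = single k 1 := by
  cases k <;> simp [hmul]

noncomputable def hmulRight (m : List ℕ) : (List ℕ →₀ ℤ) →ₗ[ℤ] List ℕ →₀ ℤ :=
  linearCombination ℤ (hmul · m)

noncomputable def hmulLeft (k : List ℕ) : (List ℕ →₀ ℤ) →ₗ[ℤ] List ℕ →₀ ℤ :=
  linearCombination ℤ (hmul k ·)

lemma hmulExt_single_right (x : List ℕ →₀ ℤ) (m : List ℕ) :
    hmulExt x (single m 1) = hmulRight m x := by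
  simp [hmulExt, hmulRight, linearCombination_apply]

lemma hmulExt_single_left (k : List ℕ) (y : List ℕ →₀ ℤ) :
    hmulExt (single k 1) y = hmulLeft k y := by
  simp [hmulExt, hmulLeft, linearCombination_apply]

lemma hmulRight_nil (x : List ℕ →₀ ℤ) : hmulRight [] x = x := by
  simp [hmulRight, linearCombination_apply, hmul_nil_right]

lemma hmulLeft_nil (y : List ℕ →₀ ℤ) : hmulLeft [] y = y := by
  simp [hmulLeft, linearCombination_apply, hmul.eq_1]

lemma hmulRight_cons_mapDomain_cons (a c : ℕ) (m : List ℕ) (x : List ℕ →₀ ℤ) :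
    hmulRight (c :: m) (x.mapDomain (a :: ·)) =
      (hmulRight (c :: m) x).mapDomain (a :: ·) +
      (hmulRight m (x.mapDomain (a :: ·))).mapDomain (c :: ·) +
      (hmulRight m x).mapDomain ((a + c) :: ·) := by
  induction x using Finsupp.induction_linear with
  | zero => simp
  | add x y hx hy => simp only [mapDomain_add, map_add, hx, hy]; abel
  | single n r => simp [hmulRight, mapDomain_single, hmul.eq_3, mapDomain_smul]

lemma hmulLeft_cons_mapDomain_cons (a c : ℕ) (k : List ℕ) (y : List ℕ →₀ ℤ) :
    hmulLeft (a :: k) (y.mapDomain (c :: ·)) =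
      (hmulLeft k (y.mapDomain (c :: ·))).mapDomain (a :: ·) +
      (hmulLeft (a :: k) y).mapDomain (c :: ·) +
      (hmulLeft k y).mapDomain ((a + c) :: ·) := by
  induction y using Finsupp.induction_linear with
  | zero => simp
  | add x y hx hy => simp only [mapDomain_add, map_add, hx, hy]; abel
  | single n r => simp [hmulLeft, mapDomain_single, hmul.eq_3, mapDomain_smul]

lemma hmulRight_cons_hmul_cons_cons (a b c : ℕ) (k l m : List ℕ) :
    hmulRight (c :: m) (hmul (a :: k) (b :: l)) =
      (hmulRight (c :: m) (hmul k (b :: l))).mapDomain (a :: ·) +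
      (hmulRight (c :: m) (hmul (a :: k) l)).mapDomain (b :: ·) +
      (hmulRight (c :: m) (hmul k l)).mapDomain ((a + b) :: ·) +
      (hmulRight m (hmul (a :: k) (b :: l))).mapDomain (c :: ·) +
      (hmulRight m (hmul k (b :: l))).mapDomain ((a + c) :: ·) +
      (hmulRight m (hmul (a :: k) l)).mapDomain ((b + c) :: ·) +
      (hmulRight m (hmul k l)).mapDomain ((a + b + c) :: ·) := by
  simp only [hmul.eq_3 a k b l, map_add, hmulRight_cons_mapDomain_cons, mapDomain_add]
  ac_rfl

lemma hmulLeft_cons_hmul_cons_cons (a b c : ℕ) (k l m : List ℕ) :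
    hmulLeft (a :: k) (hmul (b :: l) (c :: m)) =
      (hmulLeft k (hmul (b :: l) (c :: m))).mapDomain (a :: ·) +
      (hmulLeft (a :: k) (hmul l (c :: m))).mapDomain (b :: ·) +
      (hmulLeft k (hmul l (c :: m))).mapDomain ((a + b) :: ·) +
      (hmulLeft (a :: k) (hmul (b :: l) m)).mapDomain (c :: ·) +
      (hmulLeft k (hmul (b :: l) m)).mapDomain ((a + c) :: ·) +
      (hmulLeft (a :: k) (hmul l m)).mapDomain ((b + c) :: ·) +
      (hmulLeft k (hmul l m)).mapDomain ((a + b + c) :: ·) := by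
  simp only [hmul.eq_3 b l c m, map_add, hmulLeft_cons_mapDomain_cons, mapDomain_add,
    ← Nat.add_assoc a b c]
  ac_rfl

theorem hmulRight_hmul : ∀ k l m : List ℕ, hmulRight m (hmul k l) = hmulLeft k (hmul l m)
  | [], l, m => by rw [hmul.eq_1, hmulRight, linearCombination_single, one_smul, hmulLeft_nil]
  | a :: k, [], m => by
      rw [hmul_nil_right, hmul.eq_1, hmulRight, hmulLeft, linearCombination_single,
        linearCombination_single]
  | a :: k, b :: l, [] => by
      rw [hmulRight_nil, hmul_nil_right, hmulLeft, linearCombination_single, one_smul]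
  | a :: k, b :: l, c :: m => by
      rw [hmulRight_cons_hmul_cons_cons, hmulLeft_cons_hmul_cons_cons,
        hmulRight_hmul k (b :: l) (c :: m), hmulRight_hmul (a :: k) l (c :: m),
        hmulRight_hmul k l (c :: m), hmulRight_hmul (a :: k) (b :: l) m,
        hmulRight_hmul k (b :: l) m, hmulRight_hmul (a :: k) l m, hmulRight_hmul k l m]
termination_by k l m => k.length + l.length + m.length

/-- The harmonic product is associative. -/
theorem hmul_assoc (k l m : List ℕ) :
    hmulExt (hmul k l) (Finsupp.single m 1) = hmulExt (Finsupp.single k 1) (hmul l m) := by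
  rw [hmulExt_single_right, hmulExt_single_left, hmulRight_hmul]
end

section
/- Stuffle identity for truncated sums: for any indices k = (k₁,…,k_r) and l = (l₁,…,l_s) of positive integers and any N ≥ 1, ζ_N(k)·ζ_N(l) = ζ_N(k*l), where ζ_N(k₁,…,k_r) := ∑_{N≥n₁>⋯>n_r≥1} ∏ n_i^{-k_i}, ζ_N is extended linearly to formal sums of indices, and * is the harmonic product. -/
/-- Truncated MZV: ∑_{N≥n₁>⋯>n_r≥1} ∏ nᵢ^{-kᵢ} ∈ ℚ. -/
def zetaN (N : ℕ) (k : List ℕ) : ℚ :=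
  ∑ n ∈ (Finset.univ : Finset (Fin k.length → Fin (N + 1))).filter
      (fun n => (∀ i j : Fin k.length, i < j → (n j : ℕ) < (n i : ℕ)) ∧
        ∀ i, 1 ≤ (n i : ℕ)),
    ∏ i, ((n i : ℚ) ^ k.get i)⁻¹

/-- Linear extension of the truncated MZV to formal ℤ-linear combinations. -/
def zetaNExt (N : ℕ) (x : List ℕ →₀ ℤ) : ℚ :=
  x.sum fun c coef => (coef : ℚ) * zetaN N c

/-! Splitting off the largest summation variable gives
`ζ_{M+1}(a, k) = ζ_M(a, k) + (M+1)^{-a} ζ_M(k)`. Multiplying two such expansions, the three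
cross terms are exactly the expansions of the three summands of `(a, k) * (b, l)`, according as
`M + 1` is taken by the first sum only, the second only, or both; induction on `M` and on the
indices then closes the identity. -/

open Finset

def decSeqs (M r : ℕ) : Finset (Fin r → ℕ) :=
  (Fintype.piFinset fun _ => Icc 1 M).filter StrictAnti

lemma mem_decSeqs {M r : ℕ} {n : Fin r → ℕ} :
    n ∈ decSeqs M r ↔ (∀ i, n i ∈ Icc 1 M) ∧ StrictAnti n := by
  simp [decSeqs]

lemma Fin.strictAnti_cons {α : Type*} [Preorder α] {n : ℕ} {f : Fin n → α} {a : α} :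
    StrictAnti (Fin.cons a f : Fin (n + 1) → α) ↔ (∀ j, f j < a) ∧ StrictAnti f :=
  Fin.strictMono_cons (α := αᵒᵈ)

lemma mem_decSeqs_succ {M r : ℕ} {n : Fin (r + 1) → ℕ} :
    n ∈ decSeqs M (r + 1) ↔ n 0 ∈ Icc 1 M ∧ Fin.tail n ∈ decSeqs (n 0 - 1) r := by
  rw [← Fin.cons_self_tail n]
  simp only [mem_decSeqs, Fin.forall_fin_succ, Fin.cons_zero, Fin.cons_succ, Fin.tail_cons,
    Fin.strictAnti_cons, mem_Icc]
  constructor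
  · rintro ⟨⟨h0, hs⟩, hlt, ha⟩
    exact ⟨h0, fun i => ⟨(hs i).1, by have := hlt i; omega⟩, ha⟩
  · rintro ⟨h0, hs, ha⟩
    exact ⟨⟨h0, fun i => ⟨(hs i).1, by have := (hs i).2; omega⟩⟩,
      fun i => by have := (hs i).2; omega, ha⟩

lemma sum_decSeqs_succ {β : Type*} [AddCommMonoid β] (M r : ℕ) (F : (Fin (r + 1) → ℕ) → β) :
    ∑ n ∈ decSeqs M (r + 1), F n = ∑ m ∈ Icc 1 M, ∑ p ∈ decSeqs (m - 1) r, F (Fin.cons m p) := by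
  rw [sum_sigma']
  refine sum_nbij' (fun n => ⟨n 0, Fin.tail n⟩) (fun p => Fin.cons p.1 p.2) ?_ ?_ ?_ ?_ ?_
  · intro n hn
    simpa [mem_sigma] using mem_decSeqs_succ.mp hn
  · rintro ⟨m, p⟩ hp
    simpa [mem_decSeqs_succ] using hp
  · intro n _; exact Fin.cons_self_tail n
  · rintro ⟨m, p⟩ _; simp
  · intro n _; simp

lemma zetaN_eq_sum_decSeqs (N : ℕ) (k : List ℕ) :
    zetaN N k = ∑ n ∈ decSeqs N k.length, ∏ i, ((n i : ℚ) ^ k.get i)⁻¹ := by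
  have val_ofNat {n : Fin k.length → ℕ} (hn : n ∈ decSeqs N k.length) (i : Fin k.length) :
      (Fin.ofNat (N + 1) (n i) : ℕ) = n i :=
    Nat.mod_eq_of_lt (Nat.lt_succ_of_le (mem_Icc.mp ((mem_decSeqs.mp hn).1 i)).2)
  refine sum_nbij' (fun n i => (n i : ℕ)) (fun n i => Fin.ofNat (N + 1) (n i)) ?_ ?_ ?_ ?_ ?_
  · intro n hn
    obtain ⟨hanti, hpos⟩ := (mem_filter.mp hn).2
    exact mem_decSeqs.mpr ⟨fun i => mem_Icc.mpr ⟨hpos i, Nat.lt_succ_iff.mp (n i).isLt⟩, hanti⟩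
  · intro n hn
    refine mem_filter.mpr ⟨mem_univ _, fun i j hij => ?_, fun i => ?_⟩
    · simpa only [val_ofNat hn] using (mem_decSeqs.mp hn).2 hij
    · simpa only [val_ofNat hn] using (mem_Icc.mp ((mem_decSeqs.mp hn).1 i)).1
  · intro n _; simp
  · intro n hn; funext i; exact val_ofNat hn i
  · intro n _; simp

lemma zetaN_nil (N : ℕ) : zetaN N [] = 1 := by
  simp [zetaN]

lemma zetaN_cons (M a : ℕ) (k : List ℕ) :
    zetaN M (a :: k) = ∑ m ∈ Icc 1 M, ((m : ℚ) ^ a)⁻¹ * zetaN (m - 1) k := by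
  simp only [zetaN_eq_sum_decSeqs, mul_sum, List.length_cons, sum_decSeqs_succ]
  refine sum_congr rfl fun m _ => sum_congr rfl fun p _ => ?_
  rw [Fin.prod_univ_succ]
  rfl

lemma zetaN_zero_cons (a : ℕ) (k : List ℕ) : zetaN 0 (a :: k) = 0 := by
  simp [zetaN_cons]

lemma zetaN_succ_cons (M a : ℕ) (k : List ℕ) :
    zetaN (M + 1) (a :: k) = zetaN M (a :: k) + (((M + 1 : ℕ) : ℚ) ^ a)⁻¹ * zetaN M k := by
  rw [zetaN_cons, zetaN_cons, sum_Icc_succ_top (by omega), Nat.add_sub_cancel]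

lemma zetaNExt_add (N : ℕ) (x y : List ℕ →₀ ℤ) :
    zetaNExt N (x + y) = zetaNExt N x + zetaNExt N y :=
  Finsupp.sum_add_index' (fun _ => by simp) fun _ _ _ => by push_cast; ring

lemma zetaNExt_single (N : ℕ) (k : List ℕ) : zetaNExt N (Finsupp.single k 1) = zetaN N k := by
  simp [zetaNExt]

lemma zetaNExt_mapDomain_cons (N a : ℕ) (x : List ℕ →₀ ℤ) :
    zetaNExt N (x.mapDomain (a :: ·)) = x.sum fun c coef => (coef : ℚ) * zetaN N (a :: c) :=
  Finsupp.sum_mapDomain_index_inj List.cons_injective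

lemma zetaNExt_zero_mapDomain_cons (a : ℕ) (x : List ℕ →₀ ℤ) :
    zetaNExt 0 (x.mapDomain (a :: ·)) = 0 := by
  simp [zetaNExt_mapDomain_cons, zetaN_zero_cons]

lemma zetaNExt_succ_mapDomain_cons (M a : ℕ) (x : List ℕ →₀ ℤ) :
    zetaNExt (M + 1) (x.mapDomain (a :: ·)) =
      zetaNExt M (x.mapDomain (a :: ·)) + (((M + 1 : ℕ) : ℚ) ^ a)⁻¹ * zetaNExt M x := by
  rw [zetaNExt_mapDomain_cons, zetaNExt_mapDomain_cons, zetaNExt, Finsupp.mul_sum]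
  simp only [zetaN_succ_cons, mul_add, Finsupp.sum_add, mul_left_comm]

theorem zetaN_stuffle_general (k l : List ℕ) (N : ℕ) :
    zetaN N k * zetaN N l = zetaNExt N (hmul k l) := by
  induction k, l using hmul.induct generalizing N with
  | case1 l => rw [hmul, zetaN_nil, one_mul, zetaNExt_single]
  | case2 k hk => rw [hmul.eq_2 _ hk, zetaN_nil, mul_one, zetaNExt_single]
  | case3 a k b l ih₁ ih₂ ih₃ =>
    rw [hmul, zetaNExt_add, zetaNExt_add]
    induction N with
    | zero => simp only [zetaN_zero_cons, zetaNExt_zero_mapDomain_cons, zero_mul, add_zero]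
    | succ M ihM =>
      simp only [zetaN_succ_cons, zetaNExt_succ_mapDomain_cons, ← ih₁, ← ih₂, ← ih₃, pow_add,
        mul_inv]
      linear_combination ihM

/-- Stuffle identity for truncated multiple harmonic sums. -/
theorem zetaN_stuffle (k l : List ℕ) (N : ℕ) (hN : 1 ≤ N) :
    zetaN N k * zetaN N l = zetaNExt N (hmul k l) :=
  zetaN_stuffle_general k l N
end
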